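/- Let a ≥ 5 and write a = 3A + a₀ with A a nonnegative integer and a₀ ∈ {0,1,2}. Then N_{K/ℚ}(α(v,v)) < N_{K/ℚ}(α(v+1,v+1)) for all integers v with 0 ≤ v ≤ A−1. -/

import Mathlib

open IntermediateField

noncomputable section

/-- The element `α(v,W) = −v − (v(a+2) + 1 + W)ρ + (v+1)ρ²` of `ℚ(ρ) ⊆ ℝ`,
where `ρ` is the (largest real) root of the simplest cubic polynomial. -/
def alphaS (a : ℤ) (ρ : ℝ) (v W : ℤ) : ℚ⟮ρ⟯ :=
  -((v : ℤ) : ℚ⟮ρ⟯) - ((v * (a + 2) + 1 + W : ℤ) : ℚ⟮ρ⟯) * AdjoinSimple.gen ℚ ρ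
    + ((v + 1 : ℤ) : ℚ⟮ρ⟯) * AdjoinSimple.gen ℚ ρ ^ 2

theorem norm_alphaS (a : ℤ) (ρ : ℝ)
    (hroot : ρ ^ 3 - (a : ℝ) * ρ ^ 2 - ((a : ℝ) + 3) * ρ - 1 = 0)
    (hdeg : Module.finrank ℚ ℚ⟮ρ⟯ = 3) (v W : ℤ) :
    Algebra.norm ℚ (alphaS a ρ v W) =
      ((3 - 3*W^2 - W^3 - 3*v*W - 3*v*W^2 - 3*v^2 + v^3 + 2*a + 3*a*W + a*W^2
        + 3*a*v + a*v*W - a*v*W^2 - 2*a*v^2 - a*v^2*W + a^2*v + a^2*v*W : ℤ) : ℚ) := by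
  have hFD : FiniteDimensional ℚ ℚ⟮ρ⟯ :=
    FiniteDimensional.of_finrank_pos (by rw [hdeg]; norm_num)
  set θ : ℚ⟮ρ⟯ := AdjoinSimple.gen ℚ ρ with hθdef
  have hint : IsIntegral ℚ θ := IsIntegral.of_finite ℚ θ
  have hcube : θ ^ 3 = (a : ℚ⟮ρ⟯) * θ ^ 2 + ((a : ℚ⟮ρ⟯) + 3) * θ + 1 := by
    apply (algebraMap ℚ⟮ρ⟯ ℝ).injective
    simp only [map_pow, map_add, map_mul, map_one, map_ofNat, map_intCast,
      hθdef, AdjoinSimple.algebraMap_gen]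
    linarith [hroot]
  have hρint : IsIntegral ℚ ρ := by
    have := hint.map (IntermediateField.val ℚ⟮ρ⟯)
    simpa [hθdef] using this
  set pb := IntermediateField.adjoin.powerBasis hρint with hpb
  have hgen : pb.gen = θ := rfl
  have hdim : pb.dim = 3 := by rw [← pb.finrank, hdeg]
  set B : Module.Basis (Fin 3) ℚ ℚ⟮ρ⟯ := pb.basis.reindex (finCongr hdim) with hBdef
  have hB : ∀ i : Fin 3, B i = θ ^ (i : ℕ) := by
    intro i
    rw [hBdef, Module.Basis.reindex_apply, pb.basis_eq_pow, hgen]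
    congr 1
  have hrepr : ∀ (q0 q1 q2 : ℚ) (i : Fin 3),
      B.repr (q0 • B 0 + q1 • B 1 + q2 • B 2) i = ![q0, q1, q2] i := by
    intro q0 q1 q2 i
    rw [map_add, map_add, map_smul, map_smul, map_smul,
      B.repr_self, B.repr_self, B.repr_self]
    fin_cases i <;> simp [Finsupp.single_apply]
  set c0 : ℤ := -v with hc0
  set c1 : ℤ := -(v*(a+2)+1+W) with hc1
  set c2 : ℤ := v+1 with hc2
  set D : Fin 3 → Fin 3 → ℤ :=
    ![![c0, c2, c1 + a*c2],
      ![c1, c0 + (a+3)*c2, (a+3)*c1 + (1 + a*(a+3))*c2],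
      ![c2, c1 + a*c2, c0 + a*c1 + (a+3+a^2)*c2]] with hD
  have hsm : ∀ (m : ℤ) (x : ℚ⟮ρ⟯), ((m : ℚ)) • x = (m : ℚ⟮ρ⟯) * x := by
    intro m x
    rw [Int.cast_smul_eq_zsmul, zsmul_eq_mul]
  have halpha : alphaS a ρ v W = (c0 : ℚ⟮ρ⟯) + (c1 : ℚ⟮ρ⟯) * θ + (c2 : ℚ⟮ρ⟯) * θ ^ 2 := by
    rw [alphaS, hc0, hc1, hc2]
    push_cast
    ring
  have hprod : ∀ j : Fin 3, alphaS a ρ v W * B j =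
      ((D 0 j : ℚ)) • B 0 + ((D 1 j : ℚ)) • B 1 + ((D 2 j : ℚ)) • B 2 := by
    intro j
    rw [hsm, hsm, hsm, hB 0, hB 1, hB 2, hB j, halpha]
    have f0 : ∀ (x y z : ℤ), ![x, y, z] (0 : Fin 3) = x := fun _ _ _ => rfl
    have f1 : ∀ (x y z : ℤ), ![x, y, z] (1 : Fin 3) = y := fun _ _ _ => rfl
    have f2 : ∀ (x y z : ℤ), ![x, y, z] (2 : Fin 3) = z := fun _ _ _ => rfl
    have g2 : ∀ (h : 2 < 3), (⟨2, h⟩ : Fin 3) = 2 := fun _ => rfl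
    have e0 : ((0 : Fin 3) : ℕ) = 0 := rfl
    have e1 : ((1 : Fin 3) : ℕ) = 1 := rfl
    have e2 : ((2 : Fin 3) : ℕ) = 2 := rfl
    fin_cases j <;>
      simp only [hD, Matrix.cons_val_zero, Matrix.cons_val_one, Matrix.head_cons,
        Matrix.cons_val_two, Matrix.tail_cons, Matrix.cons_val', Matrix.empty_val',
        Matrix.cons_val_fin_one, Fin.isValue, e0, e1, e2, Fin.mk_zero, Fin.mk_one,
        Matrix.vecHead, Matrix.vecTail, Function.comp, Matrix.cons_val_succ, f0, f1, f2, g2,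
        pow_zero, pow_one]
    · push_cast
      ring
    · push_cast
      linear_combination ((c2 : ℚ⟮ρ⟯)) * hcube
    · push_cast
      linear_combination ((c1 : ℚ⟮ρ⟯) + (c2 : ℚ⟮ρ⟯) * θ + (c2 : ℚ⟮ρ⟯) * (a : ℚ⟮ρ⟯)) * hcube
  have hM : Algebra.leftMulMatrix B (alphaS a ρ v W) =
      Matrix.of (fun i j => ((D i j : ℤ) : ℚ)) := by
    ext i j
    rw [Algebra.leftMulMatrix_eq_repr_mul, hprod j, hrepr]
    fin_cases i <;> simp
  rw [Algebra.norm_eq_matrix_det B, hM, Matrix.det_fin_three]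
  simp only [Matrix.of_apply, hD, hc0, hc1, hc2, Matrix.cons_val_zero, Matrix.cons_val_one,
    Matrix.head_cons, Matrix.cons_val_two, Matrix.tail_cons, Matrix.head_fin_const]
  push_cast
  ring

/-- Let `a ≥ 5`, `a = 3A + a₀` with `A ≥ 0`, `a₀ ∈ {0,1,2}`. Then
`N(α(v,v)) < N(α(v+1,v+1))` for all integers `v` with `0 ≤ v ≤ A−1`. -/
theorem stmt_3 (a A a₀ : ℤ) (ha : 5 ≤ a) (hA : 0 ≤ A)
    (ha₀ : a₀ = 0 ∨ a₀ = 1 ∨ a₀ = 2) (haA : a = 3 * A + a₀)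
    (ρ : ℝ) (hroot : ρ ^ 3 - (a : ℝ) * ρ ^ 2 - ((a : ℝ) + 3) * ρ - 1 = 0)
    (hmax : ∀ x : ℝ, x ^ 3 - (a : ℝ) * x ^ 2 - ((a : ℝ) + 3) * x - 1 = 0 → x ≤ ρ)
    (hdeg : Module.finrank ℚ ℚ⟮ρ⟯ = 3)
    (v : ℤ) (hv0 : 0 ≤ v) (hv1 : v ≤ A - 1) :
    Algebra.norm ℚ (alphaS a ρ v v) < Algebra.norm ℚ (alphaS a ρ (v + 1) (v + 1)) := by
  rw [norm_alphaS a ρ hroot hdeg v v, norm_alphaS a ρ hroot hdeg (v+1) (v+1)]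
  rw [Int.cast_lt]
  have ha₀' : 0 ≤ a₀ := by rcases ha₀ with h | h | h <;> omega
  have h3v : 3 * v + 3 ≤ a := by omega
  nlinarith [mul_nonneg (mul_nonneg (by linarith : (0:ℤ) ≤ a) (by linarith : (0:ℤ) ≤ v + 1))
      (by linarith : (0:ℤ) ≤ a - 3*v - 3),
    mul_nonneg (by linarith : (0:ℤ) ≤ v) (by linarith : (0:ℤ) ≤ a - 3*v - 3),
    mul_nonneg hv0 hv0, sq_nonneg v]
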